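/- arXiv:2102.00506 — 2 statements merged into one kernel-verified Lean document; each statement's English description precedes it below -/
import Mathlib

section
/- Let σ ∈ Σₙ have disjoint cycle decomposition with orbits O₁,…,O_r on {1,…,n}, and let ρ(0) = diag(λ₁,…,λₙ). Then the evolution ρ_σ(t) = g²(t)ρ(0) + f²(t)∑_{i=1}^{|σ|−1} R_σ^i ρ(0) R_σ^{−i}, with g(t)² = (1+(|σ|−1)e^{−t})/|σ| and f(t)² = (1−e^{−t})/|σ|, satisfies ρ_σ(t) = e^{−t} ρ(0) + (1−e^{−t}) B, where B is the diagonal matrix whose k-th entry, for k in orbit Oᵢ, equals (1/|Oᵢ|) ∑_{h∈Oᵢ} λ_h. -/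
/-- The defining representation matrix of a permutation:
`(R σ) i j = 1` if `σ j = i` and `0` otherwise. -/
def Rm (n : ℕ) (σ : Equiv.Perm (Fin n)) : Matrix (Fin n) (Fin n) ℂ :=
  Matrix.of fun i j => if σ j = i then 1 else 0

open scoped Classical in
/-- The `⟨σ⟩`-orbit of `k` in `{1,…,n}`. -/
noncomputable def orb (n : ℕ) (σ : Equiv.Perm (Fin n)) (k : Fin n) : Finset (Fin n) :=
  Finset.univ.filter (fun h => ∃ j : ℤ, (σ ^ j) k = h)

/-- The diagonal matrix `B` whose `k`-th entry is the average of the `λ_h` over the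
`⟨σ⟩`-orbit of `k`. -/
noncomputable def Bmat (n : ℕ) (σ : Equiv.Perm (Fin n)) (l : Fin n → ℂ) :
    Matrix (Fin n) (Fin n) ℂ :=
  Matrix.diagonal (fun k => (((orb n σ k).card : ℂ))⁻¹ * ∑ h ∈ orb n σ k, l h)

lemma Rm_conj (n : ℕ) (τ : Equiv.Perm (Fin n)) (l : Fin n → ℂ) :
    Rm n τ * Matrix.diagonal l * Rm n τ⁻¹ = Matrix.diagonal (fun k => l (τ⁻¹ k)) := by
  ext i j
  simp only [Rm, Matrix.mul_apply, Matrix.of_apply, Matrix.diagonal_apply]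
  simp [Finset.mul_sum, Finset.sum_ite_eq, ite_and, eq_comm]
  split <;> simp_all

lemma per_sum {M : Type*} [AddCommMonoid M] (g : ℕ → M) (d c : ℕ)
    (hg : ∀ i, g (i + d) = g i) :
    ∑ i ∈ Finset.range (c * d), g i = c • ∑ i ∈ Finset.range d, g i := by
  induction c with
  | zero => simp
  | succ c ih =>
    have : (c + 1) * d = c * d + d := by ring
    rw [this, Finset.sum_range_add, ih, succ_nsmul]
    congr 1
    refine Finset.sum_congr rfl fun j hj => ?_
    have : ∀ c : ℕ, g (j + c * d) = g j := by
      intro c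
      induction c with
      | zero => simp
      | succ c ih2 => rw [Nat.succ_mul, ← add_assoc, hg, ih2]
    rw [add_comm (c*d) j, this c]

lemma orb_eq (n : ℕ) (τ : Equiv.Perm (Fin n)) (k : Fin n) :
    orb n τ k = (Finset.range (Function.minimalPeriod (⇑τ) k)).image (fun i => (τ ^ i) k) := by
  classical
  ext h
  simp only [orb, Finset.mem_filter, Finset.mem_univ, true_and, Finset.mem_image,
    Finset.mem_range]
  constructor
  · rintro ⟨j, rfl⟩
    have hsc : τ.SameCycle k ((τ ^ j) k) := ⟨j, rfl⟩
    obtain ⟨i, hi, hik⟩ := hsc.exists_pow_eq'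
    refine ⟨i % Function.minimalPeriod (⇑τ) k, ?_, ?_⟩
    · refine Nat.mod_lt _ (Function.minimalPeriod_pos_of_mem_periodicPts
        ⟨orderOf τ, orderOf_pos τ, ?_⟩)
      show (⇑τ)^[orderOf τ] k = k
      rw [← Equiv.Perm.coe_pow, pow_orderOf_eq_one]; rfl
    · rw [← hik]
      show (⇑(τ ^ _)) k = (⇑(τ ^ i)) k
      rw [Equiv.Perm.coe_pow, Equiv.Perm.coe_pow]
      exact Function.iterate_mod_minimalPeriod_eq
  · rintro ⟨i, _, rfl⟩
    exact ⟨i, by rw [zpow_natCast]⟩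

lemma orb_card (n : ℕ) (τ : Equiv.Perm (Fin n)) (k : Fin n) :
    (orb n τ k).card = Function.minimalPeriod (⇑τ) k := by
  rw [orb_eq]
  rw [Finset.card_image_of_injOn, Finset.card_range]
  intro a ha b hb hab
  simp only [Finset.coe_range, Set.mem_Iio] at ha hb
  have := Function.iterate_injOn_Iio_minimalPeriod (f := ⇑τ) (x := k) (Set.mem_Iio.2 ha)
    (Set.mem_Iio.2 hb)
  simp only [← Equiv.Perm.coe_pow] at this
  exact this hab

lemma orb_sum (n : ℕ) (τ : Equiv.Perm (Fin n)) (k : Fin n) (l : Fin n → ℂ) :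
    ∑ h ∈ orb n τ k, l h
      = ∑ i ∈ Finset.range (Function.minimalPeriod (⇑τ) k), l ((τ ^ i) k) := by
  rw [orb_eq, Finset.sum_image]
  intro a ha b hb hab
  simp only [Finset.coe_range, Set.mem_Iio] at ha hb
  have := Function.iterate_injOn_Iio_minimalPeriod (f := ⇑τ) (x := k) (Set.mem_Iio.2 ha)
    (Set.mem_Iio.2 hb)
  simp only [← Equiv.Perm.coe_pow] at this
  exact this hab

lemma key (n : ℕ) (τ : Equiv.Perm (Fin n)) (k : Fin n) (l : Fin n → ℂ) :
    ∑ i ∈ Finset.range (orderOf τ), l ((τ ^ i) k)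
      = ((orderOf τ : ℂ) / ((orb n τ k).card : ℂ)) * ∑ h ∈ orb n τ k, l h := by
  set d := Function.minimalPeriod (⇑τ) k with hd
  have hper : Function.IsPeriodicPt (⇑τ) (orderOf τ) k := by
    show (⇑τ)^[orderOf τ] k = k
    rw [← Equiv.Perm.coe_pow, pow_orderOf_eq_one]; rfl
  have hdpos : 0 < d :=
    Function.minimalPeriod_pos_of_mem_periodicPts ⟨orderOf τ, orderOf_pos τ, hper⟩
  have hdvd : d ∣ orderOf τ := hper.minimalPeriod_dvd
  obtain ⟨c, hc⟩ := hdvd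
  have hg : ∀ i, l ((τ ^ (i + d)) k) = l ((τ ^ i) k) := by
    intro i
    congr 1
    show (⇑(τ ^ (i + d))) k = (⇑(τ ^ i)) k
    rw [Equiv.Perm.coe_pow, Equiv.Perm.coe_pow, Function.iterate_add_apply,
      Function.isPeriodicPt_minimalPeriod (⇑τ) k]
  rw [hc, mul_comm d c, per_sum _ d c hg, orb_sum, orb_card, ← hd]
  rw [nsmul_eq_mul]
  congr 1
  rw [Nat.cast_mul, mul_comm]
  have hdne : (d : ℂ) ≠ 0 := by exact_mod_cast hdpos.ne'
  field_simp

lemma orb_inv (n : ℕ) (σ : Equiv.Perm (Fin n)) (k : Fin n) :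
    orb n σ⁻¹ k = orb n σ k := by
  classical
  ext h
  simp only [orb, Finset.mem_filter, Finset.mem_univ, true_and]
  constructor
  · rintro ⟨j, rfl⟩; exact ⟨-j, by rw [← inv_zpow']⟩
  · rintro ⟨j, rfl⟩; exact ⟨-j, by rw [inv_zpow', neg_neg]⟩

lemma sum_Icc_one (m : ℕ) (hm : 0 < m) (f : ℕ → ℂ) :
    ∑ i ∈ Finset.Icc 1 (m - 1), f i = ∑ i ∈ Finset.range m, f i - f 0 := by
  have h1 : Finset.Icc 1 (m - 1) = Finset.Ico 1 m := by
    rw [← Finset.Ico_add_one_right_eq_Icc]; congr 1; omega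
  rw [h1, Finset.sum_Ico_eq_sum_range]
  conv_rhs => rw [← Nat.succ_pred_eq_of_pos hm, Finset.sum_range_succ']
  simp [add_comm]

/-- The evolution `ρ_σ(t) = g²(t)ρ(0) + f²(t)∑_{i=1}^{|σ|−1} R_σ^i ρ(0) R_σ^{−i}` with
`g(t)² = (1+(|σ|−1)e^{−t})/|σ|`, `f(t)² = (1−e^{−t})/|σ|` satisfies
`ρ_σ(t) = e^{−t} ρ(0) + (1−e^{−t}) B`, where `B` averages the eigenvalues of `ρ(0)`
over each orbit of `⟨σ⟩`. -/
theorem evolution_eq_exp_convex (n : ℕ) (σ : Equiv.Perm (Fin n)) (l : Fin n → ℂ)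
    (t : ℝ) (ht : 0 ≤ t) :
    (((1 + ((orderOf σ : ℝ) - 1) * Real.exp (-t)) / (orderOf σ : ℝ) : ℝ) : ℂ) •
        Matrix.diagonal l +
      (((1 - Real.exp (-t)) / (orderOf σ : ℝ) : ℝ) : ℂ) •
        ∑ i ∈ Finset.Icc 1 (orderOf σ - 1),
          Rm n (σ ^ i) * Matrix.diagonal l * Rm n ((σ ^ i)⁻¹)
      = (Real.exp (-t) : ℂ) • Matrix.diagonal l +
        ((1 - Real.exp (-t) : ℝ) : ℂ) • Bmat n σ l := by
  have hm : 0 < orderOf σ := orderOf_pos σ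
  simp only [Rm_conj]
  ext a b
  by_cases hab : a = b
  · subst hab
    simp only [Matrix.add_apply, Matrix.smul_apply, Matrix.sum_apply, Bmat,
      Matrix.diagonal_apply_eq, smul_eq_mul]
    have hsum : ∑ i ∈ Finset.Icc 1 (orderOf σ - 1), l ((σ ^ i)⁻¹ a)
        = ((orderOf σ : ℂ) / ((orb n σ a).card : ℂ)) * (∑ h ∈ orb n σ a, l h) - l a := by
      have h1 : ∀ i : ℕ, (σ ^ i)⁻¹ a = ((σ⁻¹) ^ i) a := by
        intro i; rw [inv_pow]
      simp only [h1]
      rw [sum_Icc_one _ hm (fun i => l ((σ⁻¹ ^ i) a))]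
      have := key n σ⁻¹ a l
      rw [orderOf_inv, orb_inv] at this
      rw [this]
      simp
    rw [hsum]
    have hcpos : 0 < (orb n σ a).card := by
      refine Finset.card_pos.2 ⟨a, ?_⟩
      classical
      simp only [orb, Finset.mem_filter, Finset.mem_univ, true_and]
      exact ⟨0, rfl⟩
    have hcne : ((orb n σ a).card : ℂ) ≠ 0 := by exact_mod_cast hcpos.ne'
    have hmne : ((orderOf σ : ℕ) : ℂ) ≠ 0 := by exact_mod_cast hm.ne'
    push_cast
    field_simp
    ring
  · simp [Matrix.add_apply, Matrix.smul_apply, Matrix.sum_apply, Bmat,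
      Matrix.diagonal_apply_ne _ hab]
end

section
/- For the evolution maps F_{(t,0)}(ρ) = g²(t)ρ + f²(t)∑_{i=1}^{|σ|−1} R_σ^i ρ R_σ^{−i} associated to a cyclic subgroup ⟨σ⟩ ⊆ Σₙ, with g(t)² = (1+(|σ|−1)e^{−t})/|σ| and f(t)² = (1−e^{−t})/|σ|, the one-parameter semigroup property holds: F_{(s−t,0)} ∘ F_{(t,0)} = F_{(s,0)} for all s ≥ t ≥ 0. -/
lemma Rm_mul (n : ℕ) (σ τ : Equiv.Perm (Fin n)) :
    Rm n (σ * τ) = Rm n σ * Rm n τ := by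
  ext i j
  simp only [Rm, Matrix.mul_apply, Matrix.of_apply, Equiv.Perm.mul_apply,
    ite_mul, one_mul, zero_mul]
  rw [Finset.sum_eq_single (τ j)]
  · by_cases h : σ (τ j) = i <;> simp [h]
  · intro k _ hk; simp [Ne.symm hk]
  · simp

lemma Rm_one (n : ℕ) : Rm n 1 = 1 := by
  ext i j
  simp [Rm, Matrix.one_apply, eq_comm]

lemma conj_conj (n : ℕ) (σ : Equiv.Perm (Fin n)) (i j : ℕ) (A : Matrix (Fin n) (Fin n) ℂ) :
    Rm n (σ ^ i) * (Rm n (σ ^ j) * A * Rm n ((σ ^ j)⁻¹)) * Rm n ((σ ^ i)⁻¹)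
      = Rm n (σ ^ (i + j)) * A * Rm n ((σ ^ (i + j))⁻¹) := by
  rw [pow_add, Rm_mul, mul_inv_rev, Rm_mul]
  noncomm_ring

noncomputable def Smap (n : ℕ) (σ : Equiv.Perm (Fin n)) (ρ : Matrix (Fin n) (Fin n) ℂ) :
    Matrix (Fin n) (Fin n) ℂ :=
  ∑ k ∈ Finset.range (orderOf σ), Rm n (σ ^ k) * ρ * Rm n ((σ ^ k)⁻¹)

lemma sum_range_shift {M : Type*} [AddCommMonoid M] (m : ℕ) (hm : 0 < m) (f : ℕ → M) (i : ℕ) :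
    ∑ j ∈ Finset.range m, f ((i + j) % m) = ∑ j ∈ Finset.range m, f (j % m) := by
  haveI : NeZero m := ⟨hm.ne'⟩
  rw [← Fin.sum_univ_eq_sum_range, ← Fin.sum_univ_eq_sum_range]
  refine Fintype.sum_equiv (Equiv.addLeft (Fin.ofNat m i)) _ _ ?_
  intro j
  simp only [Equiv.coe_addLeft, Fin.add_def, Fin.val_ofNat]
  rw [Nat.mod_add_mod, Nat.mod_mod_of_dvd _ dvd_rfl]

lemma Smap_Smap (n : ℕ) (σ : Equiv.Perm (Fin n)) (ρ : Matrix (Fin n) (Fin n) ℂ) :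
    Smap n σ (Smap n σ ρ) = ((orderOf σ : ℂ)) • Smap n σ ρ := by
  have hm : 0 < orderOf σ := orderOf_pos σ
  unfold Smap
  have h1 : ∀ i ∈ Finset.range (orderOf σ),
      Rm n (σ ^ i) * (∑ k ∈ Finset.range (orderOf σ), Rm n (σ ^ k) * ρ * Rm n ((σ ^ k)⁻¹)) *
        Rm n ((σ ^ i)⁻¹)
      = ∑ k ∈ Finset.range (orderOf σ), Rm n (σ ^ k) * ρ * Rm n ((σ ^ k)⁻¹) := by
    intro i _
    rw [Finset.mul_sum, Finset.sum_mul]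
    calc ∑ k ∈ Finset.range (orderOf σ),
          Rm n (σ ^ i) * (Rm n (σ ^ k) * ρ * Rm n ((σ ^ k)⁻¹)) * Rm n ((σ ^ i)⁻¹)
        = ∑ k ∈ Finset.range (orderOf σ),
            Rm n (σ ^ ((i + k) % orderOf σ)) * ρ * Rm n ((σ ^ ((i + k) % orderOf σ))⁻¹) := by
          refine Finset.sum_congr rfl fun k _ => ?_
          rw [conj_conj, pow_mod_orderOf]
      _ = ∑ k ∈ Finset.range (orderOf σ),
            Rm n (σ ^ (k % orderOf σ)) * ρ * Rm n ((σ ^ (k % orderOf σ))⁻¹) :=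
          sum_range_shift (orderOf σ) hm (fun k => Rm n (σ ^ k) * ρ * Rm n ((σ ^ k)⁻¹)) i
      _ = ∑ k ∈ Finset.range (orderOf σ), Rm n (σ ^ k) * ρ * Rm n ((σ ^ k)⁻¹) := by
          refine Finset.sum_congr rfl fun k hk => ?_
          rw [Nat.mod_eq_of_lt (Finset.mem_range.mp hk)]
  rw [Finset.sum_congr rfl h1, Finset.sum_const, Finset.card_range, ← Nat.cast_smul_eq_nsmul ℂ]

/-- The evolution map `F_{(t,0)}(ρ) = g²(t)ρ + f²(t)∑_{i=1}^{|σ|−1} R_σ^i ρ R_σ^{−i}`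
associated to the cyclic subgroup `⟨σ⟩`, with `g(t)² = (1+(|σ|−1)e^{−t})/|σ|` and
`f(t)² = (1−e^{−t})/|σ|`. -/
noncomputable def Fcyc (n : ℕ) (σ : Equiv.Perm (Fin n)) (t : ℝ)
    (ρ : Matrix (Fin n) (Fin n) ℂ) : Matrix (Fin n) (Fin n) ℂ :=
  (((1 + ((orderOf σ : ℝ) - 1) * Real.exp (-t)) / (orderOf σ : ℝ) : ℝ) : ℂ) • ρ +
  (((1 - Real.exp (-t)) / (orderOf σ : ℝ) : ℝ) : ℂ) •
    ∑ i ∈ Finset.Icc 1 (orderOf σ - 1), Rm n (σ ^ i) * ρ * Rm n ((σ ^ i)⁻¹)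

lemma Smap_add (n : ℕ) (σ : Equiv.Perm (Fin n)) (A B : Matrix (Fin n) (Fin n) ℂ) :
    Smap n σ (A + B) = Smap n σ A + Smap n σ B := by
  simp [Smap, mul_add, add_mul, Finset.sum_add_distrib]

lemma Smap_smul (n : ℕ) (σ : Equiv.Perm (Fin n)) (a : ℂ) (A : Matrix (Fin n) (Fin n) ℂ) :
    Smap n σ (a • A) = a • Smap n σ A := by
  simp [Smap, Matrix.mul_smul, Matrix.smul_mul, Finset.smul_sum]

lemma Fcyc_eq (n : ℕ) (σ : Equiv.Perm (Fin n)) (t : ℝ) (ρ : Matrix (Fin n) (Fin n) ℂ) :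
    Fcyc n σ t ρ = ((Real.exp (-t) : ℝ) : ℂ) • ρ +
      (((1 - Real.exp (-t)) / (orderOf σ : ℝ) : ℝ) : ℂ) • Smap n σ ρ := by
  have hm : 0 < orderOf σ := orderOf_pos σ
  have hrange : Finset.range (orderOf σ) = insert 0 (Finset.Icc 1 (orderOf σ - 1)) := by
    ext k; simp only [Finset.mem_range, Finset.mem_insert, Finset.mem_Icc]; omega
  have hS : Smap n σ ρ = ρ + ∑ i ∈ Finset.Icc 1 (orderOf σ - 1),
      Rm n (σ ^ i) * ρ * Rm n ((σ ^ i)⁻¹) := by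
    rw [Smap, hrange, Finset.sum_insert (by simp)]
    simp [Rm_one]
  rw [Fcyc, hS, smul_add]
  rw [← add_assoc, ← add_smul]
  congr 2
  have hm0 : (orderOf σ : ℝ) ≠ 0 := Nat.cast_ne_zero.mpr hm.ne'
  rw [← Complex.ofReal_add]
  congr 1
  field_simp
  ring

/-- The one-parameter semigroup property: `F_{(s−t,0)} ∘ F_{(t,0)} = F_{(s,0)}`
for all `s ≥ t ≥ 0`. -/
theorem Fcyc_semigroup (n : ℕ) (σ : Equiv.Perm (Fin n)) (s t : ℝ)
    (ht : 0 ≤ t) (hst : t ≤ s) (ρ : Matrix (Fin n) (Fin n) ℂ) :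
    Fcyc n σ (s - t) (Fcyc n σ t ρ) = Fcyc n σ s ρ := by
  have hm : 0 < orderOf σ := orderOf_pos σ
  have hm0 : (orderOf σ : ℝ) ≠ 0 := Nat.cast_ne_zero.mpr hm.ne'
  have hexp : Real.exp (-(s - t)) * Real.exp (-t) = Real.exp (-s) := by
    rw [← Real.exp_add]; ring_nf
  have hm0c : (orderOf σ : ℂ) ≠ 0 := Nat.cast_ne_zero.mpr hm.ne'
  have hce : Complex.exp ((t:ℂ) - s) * Complex.exp (-(t:ℂ)) = Complex.exp (-(s:ℂ)) := by
    rw [← Complex.exp_add]; congr 1; ring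
  rw [Fcyc_eq, Fcyc_eq, Fcyc_eq, Smap_add, Smap_smul, Smap_smul, Smap_Smap]
  match_scalars
  · push_cast
    rw [show (-((s:ℂ) - (t:ℂ))) = (t:ℂ) - s by ring]
    linear_combination hce
  · push_cast
    rw [show (-((s:ℂ) - (t:ℂ))) = (t:ℂ) - s by ring]
    field_simp [hm0c]
    linear_combination (-(1:ℂ) - (orderOf σ : ℂ)) * hce + ((orderOf σ : ℂ)) * hce
end
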